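/- arXiv:2210.03525 — 3 statements merged into one kernel-verified Lean document; each statement's English description precedes it below -/
import Mathlib

section
/- If a vector field φ in physical coordinates is related to a vector field ϕ in reference coordinates by the contravariant Piola transformation φ = (1/det J) J ϕ, then the divergences satisfy div_x φ = (1/det J) · div_ξ ϕ. -/
/-- Partial derivative of a scalar field on `ℝ³` in direction `i`. -/
noncomputable def pd3 (f : (Fin 3 → ℝ) → ℝ) (i : Fin 3) (x : Fin 3 → ℝ) : ℝ :=
  fderiv ℝ f x (Pi.single i 1)

/-- The divergence of a vector field on `ℝ³`. -/
noncomputable def div3 (F : (Fin 3 → ℝ) → (Fin 3 → ℝ)) (x : Fin 3 → ℝ) : ℝ :=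
  ∑ i, pd3 (fun y => F y i) i x

/-- The Jacobian matrix of a map `ℝ³ → ℝ³`. -/
noncomputable def jac3 (x : (Fin 3 → ℝ) → (Fin 3 → ℝ)) (ξ : Fin 3 → ℝ) :
    Matrix (Fin 3) (Fin 3) ℝ :=
  Matrix.of fun i j => pd3 (fun y => x y i) j ξ

/-!
Since `adj J * J = det J • 1`, the Piola relation says `ϕ = adj J (φ ∘ x)` near `ξ₀`. By the
product rule, `div_ξ (adj J (φ ∘ x)) = ∑ᵢ (∑ⱼ ∂ⱼ (adj J)ⱼᵢ) (φ ∘ x)ᵢ + tr (adj J · D(φ ∘ x))`.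
The first sum vanishes by the Piola identity, which follows from the symmetry of the second
derivatives of `x`; by the chain rule the trace is
`tr (adj J · Dφ · J) = tr (J · adj J · Dφ) = det J · div_x φ`.
-/

open Matrix Filter Topology

section PartialDerivatives

variable {z : Fin 3 → ℝ}

lemma pd3_apply_eq_fderiv {F : (Fin 3 → ℝ) → (Fin 3 → ℝ)} (hF : DifferentiableAt ℝ F z)
    (i j : Fin 3) : pd3 (fun y => F y i) j z = fderiv ℝ F z (Pi.single j 1) i := by
  simp [pd3, fderiv_apply hF]

lemma pd3_mul {f g : (Fin 3 → ℝ) → ℝ} (hf : DifferentiableAt ℝ f z)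
    (hg : DifferentiableAt ℝ g z) (i : Fin 3) :
    pd3 (fun y => f y * g y) i z = pd3 f i z * g z + f z * pd3 g i z := by
  simp only [pd3, fderiv_fun_mul hf hg, _root_.add_apply, _root_.smul_apply, smul_eq_mul]
  ring

lemma pd3_sub {f g : (Fin 3 → ℝ) → ℝ} (hf : DifferentiableAt ℝ f z)
    (hg : DifferentiableAt ℝ g z) (i : Fin 3) :
    pd3 (fun y => f y - g y) i z = pd3 f i z - pd3 g i z := by
  simp [pd3, fderiv_fun_sub hf hg]

lemma pd3_sum {ι : Type*} (s : Finset ι) {f : ι → (Fin 3 → ℝ) → ℝ}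
    (hf : ∀ k ∈ s, DifferentiableAt ℝ (f k) z) (i : Fin 3) :
    pd3 (fun y => ∑ k ∈ s, f k y) i z = ∑ k ∈ s, pd3 (f k) i z := by
  simp [pd3, fderiv_fun_sum hf]

lemma div3_congr_of_eventuallyEq {F G : (Fin 3 → ℝ) → (Fin 3 → ℝ)} (h : F =ᶠ[𝓝 z] G) :
    div3 F z = div3 G z :=
  Finset.sum_congr rfl fun i _ => by
    rw [pd3, pd3, Filter.EventuallyEq.fderiv_eq (h.mono fun _ hy => congrFun hy i)]

lemma div3_eq_trace (F : (Fin 3 → ℝ) → (Fin 3 → ℝ)) (z : Fin 3 → ℝ) :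
    div3 F z = (jac3 F z).trace := rfl

lemma div3_mulVec {A : (Fin 3 → ℝ) → Matrix (Fin 3) (Fin 3) ℝ} {ψ : (Fin 3 → ℝ) → (Fin 3 → ℝ)}
    (hA : ∀ i j, DifferentiableAt ℝ (fun ξ => A ξ i j) z) (hψ : DifferentiableAt ℝ ψ z) :
    div3 (fun ξ => A ξ *ᵥ ψ ξ) z =
      ∑ j, (∑ i, pd3 (fun ξ => A ξ i j) i z) * ψ z j + (A z * jac3 ψ z).trace := by
  have hψ' : ∀ j, DifferentiableAt ℝ (fun ξ => ψ ξ j) z := differentiableAt_pi.1 hψ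
  simp only [div3, mulVec, dotProduct]
  simp only [pd3_sum _ (fun j _ => (hA _ j).fun_mul (hψ' j)), pd3_mul (hA _ _) (hψ' _)]
  simp only [trace, diag, mul_apply, jac3, of_apply, Finset.sum_add_distrib, Finset.sum_mul]
  rw [Finset.sum_comm]

end PartialDerivatives

section Jacobian

variable {x : (Fin 3 → ℝ) → (Fin 3 → ℝ)} {z : Fin 3 → ℝ}

lemma jac3_eq_toMatrix' (hx : DifferentiableAt ℝ x z) :
    jac3 x z = LinearMap.toMatrix' (fderiv ℝ x z : (Fin 3 → ℝ) →ₗ[ℝ] (Fin 3 → ℝ)) := by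
  ext i j
  simp [jac3, LinearMap.toMatrix'_apply, pd3_apply_eq_fderiv hx]

lemma jac3_comp {φ : (Fin 3 → ℝ) → (Fin 3 → ℝ)} (hφ : DifferentiableAt ℝ φ (x z))
    (hx : DifferentiableAt ℝ x z) : jac3 (fun ξ => φ (x ξ)) z = jac3 φ (x z) * jac3 x z := by
  rw [jac3_eq_toMatrix' (hφ.fun_comp' z hx), jac3_eq_toMatrix' hφ, jac3_eq_toMatrix' hx,
    fderiv_fun_comp z hφ hx, ← LinearMap.toMatrix'_comp]
  rfl

lemma differentiableAt_fderiv_apply (hx : ContDiffAt ℝ 2 x z) (i : Fin 3) :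
    DifferentiableAt ℝ (fderiv ℝ (fun y => x y i)) z :=
  ((contDiffAt_pi.1 hx i).fderiv_right (m := 1) (by norm_num)).differentiableAt one_ne_zero

lemma differentiableAt_jac3_apply (hx : ContDiffAt ℝ 2 x z) (i k : Fin 3) :
    DifferentiableAt ℝ (fun ξ => jac3 x ξ i k) z :=
  (differentiableAt_fderiv_apply hx i).clm_apply (differentiableAt_const _)

lemma pd3_jac3_apply (hx : ContDiffAt ℝ 2 x z) (i j k : Fin 3) :
    pd3 (fun ξ => jac3 x ξ i k) j z =
      fderiv ℝ (fderiv ℝ (fun y => x y i)) z (Pi.single j 1) (Pi.single k 1) := by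
  simp [jac3, pd3, fderiv_clm_apply (differentiableAt_fderiv_apply hx i) (differentiableAt_const _)]

lemma pd3_jac3_apply_comm (hx : ContDiffAt ℝ 2 x z) (i j k : Fin 3) :
    pd3 (fun ξ => jac3 x ξ i k) j z = pd3 (fun ξ => jac3 x ξ i j) k z := by
  rw [pd3_jac3_apply hx, pd3_jac3_apply hx]
  exact (contDiffAt_pi.1 hx i).isSymmSndFDerivAt (by simp) _ _

lemma differentiableAt_adjugate_jac3_apply (hx : ContDiffAt ℝ 2 x z) (i j : Fin 3) :
    DifferentiableAt ℝ (fun ξ => (jac3 x ξ).adjugate i j) z := by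
  have hd := differentiableAt_jac3_apply hx
  fin_cases i <;> fin_cases j <;>
  simp only [adjugate_fin_three, of_apply, cons_val', cons_val_zero, cons_val_one, cons_val,
    cons_val_fin_one, Fin.zero_eta, Fin.mk_one, Fin.reduceFinMk, Fin.isValue, neg_add_eq_sub] <;>
  exact ((hd _ _).fun_mul (hd _ _)).fun_sub ((hd _ _).fun_mul (hd _ _))

/-- The Piola identity: the cofactor matrix of a `C²` map has divergence-free rows. -/
theorem sum_pd3_adjugate_jac3 (hx : ContDiffAt ℝ 2 x z) (i : Fin 3) :
    ∑ j, pd3 (fun ξ => (jac3 x ξ).adjugate j i) j z = 0 := by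
  have hd := differentiableAt_jac3_apply hx
  have hc := pd3_jac3_apply_comm hx
  fin_cases i <;>
  simp only [adjugate_fin_three, of_apply, cons_val', cons_val_zero, cons_val_one, cons_val,
    cons_val_fin_one, Fin.zero_eta, Fin.mk_one, Fin.reduceFinMk, Fin.isValue, neg_add_eq_sub,
    Fin.sum_univ_three] <;>
  simp (disch := first | exact hd _ _ | exact (hd _ _).fun_mul (hd _ _)) only
    [pd3_sub, pd3_mul, hc _ 0 1, hc _ 0 2, hc _ 1 2] <;>
  ring

lemma div3_adjugate_jac3_mulVec {ψ : (Fin 3 → ℝ) → (Fin 3 → ℝ)} (hx : ContDiffAt ℝ 2 x z)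
    (hψ : DifferentiableAt ℝ ψ z) :
    div3 (fun ξ => (jac3 x ξ).adjugate *ᵥ ψ ξ) z = ((jac3 x z).adjugate * jac3 ψ z).trace := by
  simp [div3_mulVec (differentiableAt_adjugate_jac3_apply hx) hψ, sum_pd3_adjugate_jac3 hx]

end Jacobian

lemma adjugate_mulVec_inv_det_smul_mulVec {n K : Type*} [Fintype n] [DecidableEq n] [Field K]
    {A : Matrix n n K} (hA : A.det ≠ 0) (v : n → K) :
    A.adjugate *ᵥ (A.det⁻¹ • A *ᵥ v) = v := by
  rw [mulVec_smul, mulVec_mulVec, adjugate_mul, smul_mulVec, one_mulVec, smul_smul,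
    inv_mul_cancel₀ hA, one_smul]

lemma trace_adjugate_mul_mul_self {n R : Type*} [Fintype n] [DecidableEq n] [CommRing R]
    (A B : Matrix n n R) : (A.adjugate * (B * A)).trace = A.det * B.trace := by
  rw [← Matrix.mul_assoc, trace_mul_cycle, mul_adjugate, smul_mul_assoc, Matrix.one_mul,
    trace_smul, smul_eq_mul]

theorem div3_adjugate_jac3_mulVec_comp {x φ : (Fin 3 → ℝ) → (Fin 3 → ℝ)} {z : Fin 3 → ℝ}
    (hx : ContDiffAt ℝ 2 x z) (hφ : DifferentiableAt ℝ φ (x z)) :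
    div3 (fun ξ => (jac3 x ξ).adjugate *ᵥ φ (x ξ)) z = (jac3 x z).det * div3 φ (x z) := by
  have hx' : DifferentiableAt ℝ x z := hx.differentiableAt (by norm_num)
  rw [div3_adjugate_jac3_mulVec hx (hφ.fun_comp' z hx'), jac3_comp hφ hx',
    trace_adjugate_mul_mul_self, div3_eq_trace]

theorem div_contravariant_piola_general
    (Ω V : Set (Fin 3 → ℝ)) (hΩ : IsOpen Ω) (hV : IsOpen V)
    (x : (Fin 3 → ℝ) → (Fin 3 → ℝ))
    (hmaps : Set.MapsTo x Ω V)
    (hx : ContDiffOn ℝ 2 x Ω)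
    (ϕ φ : (Fin 3 → ℝ) → (Fin 3 → ℝ))
    (hφ : DifferentiableOn ℝ φ V)
    (ξ₀ : Fin 3 → ℝ) (hξ₀ : ξ₀ ∈ Ω)
    (hdet : ∀ ξ ∈ Ω, (jac3 x ξ).det ≠ 0)
    (hpiola : ∀ ξ ∈ Ω, φ (x ξ) = ((jac3 x ξ).det)⁻¹ • (jac3 x ξ).mulVec (ϕ ξ)) :
    div3 φ (x ξ₀) = ((jac3 x ξ₀).det)⁻¹ * div3 ϕ ξ₀ := by
  have hx₀ : ContDiffAt ℝ 2 x ξ₀ := hx.contDiffAt (hΩ.mem_nhds hξ₀)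
  have hφ₀ : DifferentiableAt ℝ φ (x ξ₀) := hφ.differentiableAt (hV.mem_nhds (hmaps hξ₀))
  -- writing `ϕ` through the adjugate avoids differentiating `(det J)⁻¹`
  have hϕ : ϕ =ᶠ[𝓝 ξ₀] fun ξ => (jac3 x ξ).adjugate *ᵥ φ (x ξ) := by
    filter_upwards [hΩ.mem_nhds hξ₀] with ξ hξ
    rw [hpiola ξ hξ, adjugate_mulVec_inv_det_smul_mulVec (hdet ξ hξ)]
  rw [div3_congr_of_eventuallyEq hϕ, div3_adjugate_jac3_mulVec_comp hx₀ hφ₀,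
    inv_mul_cancel_left₀ (hdet ξ₀ hξ₀)]

/-- **Contravariant Piola transformation of the divergence.**
Let `x : Ω → V` be a diffeomorphism of open subsets of `ℝ³` with Jacobian `J = Dx`,
`det J ≠ 0`.  If the vector field `φ` in physical coordinates is related to the vector
field `ϕ` in reference coordinates by the contravariant Piola transformation
`φ(x ξ) = (1/det J(ξ)) J(ξ) ϕ(ξ)`, then `div_x φ (x ξ₀) = (1/det J(ξ₀)) div_ξ ϕ (ξ₀)`. -/
theorem div_contravariant_piola
    (Ω V : Set (Fin 3 → ℝ)) (hΩ : IsOpen Ω) (hV : IsOpen V)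
    (x xinv : (Fin 3 → ℝ) → (Fin 3 → ℝ))
    (hmaps : Set.MapsTo x Ω V) (hmaps' : Set.MapsTo xinv V Ω)
    (hleft : ∀ ξ ∈ Ω, xinv (x ξ) = ξ) (hright : ∀ y ∈ V, x (xinv y) = y)
    (hx : ContDiffOn ℝ 2 x Ω) (hxinv : ContDiffOn ℝ 2 xinv V)
    (ϕ φ : (Fin 3 → ℝ) → (Fin 3 → ℝ))
    (hϕ : DifferentiableOn ℝ ϕ Ω) (hφ : DifferentiableOn ℝ φ V)
    (ξ₀ : Fin 3 → ℝ) (hξ₀ : ξ₀ ∈ Ω)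
    (hdet : ∀ ξ ∈ Ω, (jac3 x ξ).det ≠ 0)
    (hpiola : ∀ ξ ∈ Ω, φ (x ξ) = ((jac3 x ξ).det)⁻¹ • (jac3 x ξ).mulVec (ϕ ξ)) :
    div3 φ (x ξ₀) = ((jac3 x ξ₀).det)⁻¹ * div3 ϕ ξ₀ :=
  div_contravariant_piola_general Ω V hΩ hV x hmaps hx ϕ φ hφ ξ₀ hξ₀ hdet hpiola
end

section
/- Let ϑ(ξ,η) = (c₁η − c₂, c₃ − c₁ξ) with c₁ ≠ 0, and let n be a polynomial of degree exactly p. Then the scalar curl of n·ϑ, namely rot(nϑ) = (c₃ − c₁ξ) ∂_ξ n + (c₂ − c₁η)(−∂_η n)·(−1) − 2c₁ n = (c₃ − c₁ξ) n_ξ + (c₂ − c₁η) n_η − 2 c₁ n, is a polynomial of degree exactly p; in particular the polynomial degree of n is preserved under this curl operation. -/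
open MvPolynomial

/-- The scalar curl of `n·ϑ` for the template vector field
`ϑ(ξ,η) = (c₁η - c₂, c₃ - c₁ξ)`:
`rot(nϑ) = (c₃ - c₁ξ) n_ξ + (c₂ - c₁η) n_η - 2c₁ n`. -/
noncomputable def rotTemplate (c₁ c₂ c₃ : ℝ) (n : MvPolynomial (Fin 2) ℝ) :
    MvPolynomial (Fin 2) ℝ :=
  (C c₃ - C c₁ * X 0) * pderiv 0 n + (C c₂ - C c₁ * X 1) * pderiv 1 n - C (2 * c₁) * n

/-!
Write `rot n = c₃ ∂_ξ n + c₂ ∂_η n - c₁ (ξ ∂_ξ + η ∂_η + 2) n`. The Euler operator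
`ξ ∂_ξ + η ∂_η` multiplies the coefficient of a monomial of degree `d` by `d`, while the
derivatives `∂_ξ n`, `∂_η n` have no monomials of degree `≥ p`. Hence in degrees `≥ p` the
coefficients of `rot n` are those of `n` scaled by `-c₁ (d + 2) ≠ 0`, so both polynomials
have the same top degree.
-/

namespace MvPolynomial

variable {R σ : Type*}

theorem totalDegree_eq_of_coeff_ne_zero_iff [CommSemiring R] {f g : MvPolynomial σ R}
    (h : ∀ m : σ →₀ ℕ, g.totalDegree ≤ m.degree → (coeff m f ≠ 0 ↔ coeff m g ≠ 0)) :
    f.totalDegree = g.totalDegree := by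
  apply le_antisymm
  · refine Finset.sup_le fun m hm => ?_
    by_contra! hlt
    exact (h m hlt.le).mp (mem_support_iff.mp hm) (coeff_eq_zero_of_totalDegree_lt hlt)
  · rcases g.support.eq_empty_or_nonempty with hg | hg
    · simp [totalDegree, hg]
    obtain ⟨m, hm, hmax⟩ := Finset.exists_mem_eq_sup g.support hg fun s => s.degree
    have hdeg : g.totalDegree = m.degree := hmax
    rw [hdeg]
    exact le_totalDegree (mem_support_iff.mpr <| (h m hdeg.le).mpr (mem_support_iff.mp hm))

theorem coeff_X_mul_pderiv [CommSemiring R] (i : σ) (f : MvPolynomial σ R) (m : σ →₀ ℕ) :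
    coeff m (X i * pderiv i f) = m i * coeff m f := by
  classical
  rw [coeff_X_mul', coeff_pderiv]
  split_ifs with h
  · rw [Finsupp.mem_support_iff] at h
    rw [Finsupp.sub_add_single_one_cancel h, Finsupp.tsub_apply, Finsupp.single_eq_same,
      mul_comm, ← Nat.cast_add_one, Nat.sub_add_cancel (Nat.one_le_iff_ne_zero.mpr h)]
  · simp [Finsupp.notMem_support_iff.mp h]

theorem coeff_pderiv_eq_zero_of_totalDegree_le [CommSemiring R] {f : MvPolynomial σ R}
    {m : σ →₀ ℕ} (i : σ) (hm : f.totalDegree ≤ m.degree) : coeff m (pderiv i f) = 0 := by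
  have hlt : f.totalDegree < (m + Finsupp.single i 1).degree := by
    rw [map_add, Finsupp.degree_single]
    omega
  rw [coeff_pderiv, coeff_eq_zero_of_totalDegree_lt hlt, zero_mul]

end MvPolynomial

theorem coeff_rotTemplate_of_totalDegree_le (c₁ c₂ c₃ : ℝ) {n : MvPolynomial (Fin 2) ℝ}
    {m : Fin 2 →₀ ℕ} (hm : n.totalDegree ≤ m.degree) :
    coeff m (rotTemplate c₁ c₂ c₃ n) = -(c₁ * (m.degree + 2)) * coeff m n := by
  have hdeg : (m.degree : ℝ) = m 0 + m 1 := by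
    rw [Finsupp.degree_eq_sum, Fin.sum_univ_two, Nat.cast_add]
  simp only [rotTemplate, sub_mul, mul_assoc, coeff_add, coeff_sub, coeff_C_mul,
    coeff_X_mul_pderiv, coeff_pderiv_eq_zero_of_totalDegree_le _ hm, hdeg]
  ring

theorem rotTemplate_totalDegree_general (c₁ c₂ c₃ : ℝ) (hc₁ : c₁ ≠ 0)
    (p : ℕ) (n : MvPolynomial (Fin 2) ℝ) (hdeg : n.totalDegree = p) :
    (rotTemplate c₁ c₂ c₃ n).totalDegree = p := by
  subst hdeg
  refine totalDegree_eq_of_coeff_ne_zero_iff fun m hm => ?_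
  have hscale : -(c₁ * (m.degree + 2)) ≠ 0 := neg_ne_zero.mpr (mul_ne_zero hc₁ (by positivity))
  rw [coeff_rotTemplate_of_totalDegree_le c₁ c₂ c₃ hm, mul_ne_zero_iff_left hscale]

/-- For `ϑ(ξ,η) = (c₁η - c₂, c₃ - c₁ξ)` with `c₁ ≠ 0` and a nonzero bivariate
polynomial `n` of total degree exactly `p`, the scalar curl `rot(nϑ)` is a polynomial
of degree exactly `p`: the polynomial degree is preserved under this curl operation. -/
theorem rotTemplate_totalDegree (c₁ c₂ c₃ : ℝ) (hc₁ : c₁ ≠ 0)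
    (p : ℕ) (n : MvPolynomial (Fin 2) ℝ) (hn : n ≠ 0) (hdeg : n.totalDegree = p) :
    (rotTemplate c₁ c₂ c₃ n).totalDegree = p :=
  rotTemplate_totalDegree_general c₁ c₂ c₃ hc₁ p n hdeg
end

section
/- For the antiplane shear relaxed micromorphic bilinear form a((u,p),(u,p)) = ∫_A μ_e|∇u − p|² + μ_micro|p|² + μ_macro L_c² (rot p)² dA with positive constants μ_e, μ_micro, μ_macro, L_c, the form is coercive on H₀¹(A) × H₀(curl, A) in the sense that a((u,p),(u,p)) ≥ c(‖∇u‖²_{L²} + ‖p‖²_{L²} + ‖rot p‖²_{L²}) for some c > 0 depending only on the material constants. -/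
/-!
Pointwise, `‖∇u‖² ≤ 2‖∇u - p‖² + 2‖p‖²` (triangle inequality and `(s + t)² ≤ 2(s² + t²)`), so
`μ_e‖∇u - p‖² + μ_micro‖p‖²` dominates `c(‖∇u‖² + ‖p‖²)` as soon as `2c ≤ μ_e` and
`3c ≤ μ_micro`; the curl term is handled by `c ≤ μ_macro L_c²`. Integrating this pointwise
bound gives the coercivity estimate, with `c = min (min (μ_e / 2) (μ_micro / 3)) (μ_macro L_c²)`.
-/

open MeasureTheory

section NormSq

variable {E : Type*} [SeminormedAddCommGroup E]

theorem norm_sub_sq_le (a b : E) : ‖a - b‖ ^ 2 ≤ 2 * (‖a‖ ^ 2 + ‖b‖ ^ 2) :=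
  (pow_le_pow_left₀ (norm_nonneg _) (norm_sub_le a b) 2).trans add_sq_le

theorem norm_sq_le_two_mul_norm_sub_sq_add (a b : E) :
    ‖a‖ ^ 2 ≤ 2 * (‖a - b‖ ^ 2 + ‖b‖ ^ 2) := by
  simpa [norm_neg] using norm_sub_sq_le (a - b) (-b)

theorem mul_norm_sq_add_norm_sq_le {c μe μmicro : ℝ} (hc : 0 ≤ c) (hce : c ≤ μe / 2)
    (hcmicro : c ≤ μmicro / 3) (a b : E) :
    c * (‖a‖ ^ 2 + ‖b‖ ^ 2) ≤ μe * ‖a - b‖ ^ 2 + μmicro * ‖b‖ ^ 2 := by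
  calc c * (‖a‖ ^ 2 + ‖b‖ ^ 2) ≤ c * (2 * (‖a - b‖ ^ 2 + ‖b‖ ^ 2) + ‖b‖ ^ 2) := by
        gcongr
        exact norm_sq_le_two_mul_norm_sub_sq_add a b
    _ = 2 * c * ‖a - b‖ ^ 2 + 3 * c * ‖b‖ ^ 2 := by ring
    _ ≤ μe * ‖a - b‖ ^ 2 + μmicro * ‖b‖ ^ 2 := by gcongr <;> linarith

theorem MeasureTheory.Integrable.norm_sub_sq {α : Type*} [MeasurableSpace α] {μ : Measure α}
    {f g : α → E} (hf : Integrable (fun x => ‖f x‖ ^ 2) μ)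
    (hg : Integrable (fun x => ‖g x‖ ^ 2) μ)
    (hfg : AEStronglyMeasurable (fun x => f x - g x) μ) :
    Integrable (fun x => ‖f x - g x‖ ^ 2) μ := by
  refine ((hf.add hg).const_mul 2).mono' (hfg.norm.pow 2) (ae_of_all _ fun x => ?_)
  rw [Real.norm_of_nonneg (by positivity)]
  exact norm_sub_sq_le (f x) (g x)

end NormSq

/-- **Coercivity of the antiplane-shear relaxed micromorphic bilinear form.**
For positive material constants `μ_e, μ_micro, μ_macro, L_c` there is a constant
`c > 0`, depending only on the material constants, such that for every bounded open
domain `A ⊆ ℝ²` and all fields `∇u` (the gradient of the displacement), `p` (the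
microdistortion) and `rot p` (its scalar curl), all square-integrable on `A`,
the quadratic form
`a((u,p),(u,p)) = ∫_A μ_e ‖∇u - p‖² + μ_micro ‖p‖² + μ_macro L_c² (rot p)²`
dominates `c (‖∇u‖²_{L²} + ‖p‖²_{L²} + ‖rot p‖²_{L²})`. -/
theorem relaxed_micromorphic_antiplane_coercive
    (μe μmicro μmacro Lc : ℝ)
    (hμe : 0 < μe) (hμmicro : 0 < μmicro) (hμmacro : 0 < μmacro) (hLc : 0 < Lc) :
    ∃ c > 0,
      ∀ (A : Set (EuclideanSpace ℝ (Fin 2))), MeasurableSet A → IsOpen A →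
        Bornology.IsBounded A →
        ∀ (Du P : EuclideanSpace ℝ (Fin 2) → EuclideanSpace ℝ (Fin 2))
          (rotP : EuclideanSpace ℝ (Fin 2) → ℝ),
          IntegrableOn (fun x => ‖Du x‖ ^ 2) A volume →
          IntegrableOn (fun x => ‖P x‖ ^ 2) A volume →
          IntegrableOn (fun x => (rotP x) ^ 2) A volume →
          AEStronglyMeasurable (fun x => Du x - P x) (volume.restrict A) →
          c * ((∫ x in A, ‖Du x‖ ^ 2) + (∫ x in A, ‖P x‖ ^ 2) +
                (∫ x in A, (rotP x) ^ 2)) ≤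
            ∫ x in A, (μe * ‖Du x - P x‖ ^ 2 + μmicro * ‖P x‖ ^ 2 +
              μmacro * Lc ^ 2 * (rotP x) ^ 2) := by
  set c := min (min (μe / 2) (μmicro / 3)) (μmacro * Lc ^ 2)
  have hc : 0 < c := lt_min (lt_min (by positivity) (by positivity)) (by positivity)
  have hce : c ≤ μe / 2 := (min_le_left _ _).trans (min_le_left _ _)
  have hcmicro : c ≤ μmicro / 3 := (min_le_left _ _).trans (min_le_right _ _)
  have hcmacro : c ≤ μmacro * Lc ^ 2 := min_le_right _ _
  refine ⟨c, hc, fun A _ _ _ Du P rotP hDu hP hrot hDuP => ?_⟩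
  have hpointwise (x) : c * (‖Du x‖ ^ 2 + ‖P x‖ ^ 2 + rotP x ^ 2) ≤
      μe * ‖Du x - P x‖ ^ 2 + μmicro * ‖P x‖ ^ 2 + μmacro * Lc ^ 2 * rotP x ^ 2 := by
    have hcurl := mul_le_mul_of_nonneg_right hcmacro (sq_nonneg (rotP x))
    linarith [mul_norm_sq_add_norm_sq_le hc.le hce hcmicro (Du x) (P x)]
  calc c * ((∫ x in A, ‖Du x‖ ^ 2) + (∫ x in A, ‖P x‖ ^ 2) + (∫ x in A, (rotP x) ^ 2))
      = ∫ x in A, c * (‖Du x‖ ^ 2 + ‖P x‖ ^ 2 + rotP x ^ 2) := by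
        rw [integral_const_mul, integral_add ?_ hrot, integral_add hDu hP]
        exact hDu.add hP
    _ ≤ _ := integral_mono (((hDu.add hP).add hrot).const_mul c)
        ((((hDu.norm_sub_sq hP hDuP).const_mul μe).add (hP.const_mul μmicro)).add
          (hrot.const_mul _)) hpointwise
end
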